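/- arXiv:2406.19209 — 4 statements merged into one kernel-verified Lean document; each statement's English description precedes it below -/
import Mathlib

section
/- A threshold graph contains no induced subgraph isomorphic to the path P_4, the cycle C_4, or the disjoint union of two edges 2K_2. -/
def thresholdGraph {n : ℕ} (r : Fin n → Bool) : SimpleGraph (Fin n) where
  Adj i j := i ≠ j ∧ r (max i j) = true
  symm := by
    constructor
    intro i j h
    exact ⟨h.1.symm, by rw [max_comm]; exact h.2⟩
  loopless := by constructor; intro i h; exact h.1 rfl

/-- The disjoint union of two edges, on vertex set `Fin 4`: edges 0-1 and 2-3. -/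
def twoK2 : SimpleGraph (Fin 4) := SimpleGraph.fromEdgeSet {s(0, 1), s(2, 3)}

lemma threshold_key {n : ℕ} (r : Fin n → Bool) {a b c d : Fin n}
    (hab : (thresholdGraph r).Adj a b) (hcd : (thresholdGraph r).Adj c d)
    (hac : a ≠ c) (hbd : b ≠ d) :
    (thresholdGraph r).Adj a c ∨ (thresholdGraph r).Adj b d := by
  obtain ⟨-, hab2⟩ := hab
  obtain ⟨-, hcd2⟩ := hcd
  rcases max_choice a b with h1 | h1 <;> rcases max_choice c d with h2 | h2
  · left
    refine ⟨hac, ?_⟩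
    rcases max_choice a c with h | h <;> rw [h]
    · exact h1 ▸ hab2
    · exact h2 ▸ hcd2
  · rcases le_total c a with h | h
    · left
      exact ⟨hac, by rw [max_eq_left h]; exact h1 ▸ hab2⟩
    · right
      refine ⟨hbd, ?_⟩
      have hba : b ≤ a := max_eq_left_iff.mp h1
      have hcd' : c ≤ d := max_eq_right_iff.mp h2
      rw [max_eq_right (le_trans (le_trans hba h) hcd')]
      exact h2 ▸ hcd2
  · rcases le_total a c with h | h
    · left
      exact ⟨hac, by rw [max_eq_right h]; exact h2 ▸ hcd2⟩
    · right
      refine ⟨hbd, ?_⟩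
      have hab' : a ≤ b := max_eq_right_iff.mp h1
      have hdc : d ≤ c := max_eq_left_iff.mp h2
      rw [max_eq_left (le_trans (le_trans hdc h) hab')]
      exact h1 ▸ hab2
  · right
    refine ⟨hbd, ?_⟩
    rcases max_choice b d with h | h <;> rw [h]
    · exact h1 ▸ hab2
    · exact h2 ▸ hcd2

theorem stmt2 {n : ℕ} (r : Fin n → Bool) :
    IsEmpty (SimpleGraph.pathGraph 4 ↪g thresholdGraph r) ∧
    IsEmpty (SimpleGraph.cycleGraph 4 ↪g thresholdGraph r) ∧
    IsEmpty (twoK2 ↪g thresholdGraph r) := by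
  refine ⟨⟨fun f => ?_⟩, ⟨fun f => ?_⟩, ⟨fun f => ?_⟩⟩
  · have hab := f.map_adj_iff.mpr (show (SimpleGraph.pathGraph 4).Adj 0 1 by simp [SimpleGraph.pathGraph_adj])
    have hcd := f.map_adj_iff.mpr (show (SimpleGraph.pathGraph 4).Adj 2 3 by simp [SimpleGraph.pathGraph_adj])
    rcases threshold_key r hab hcd (f.injective.ne (by decide)) (f.injective.ne (by decide))
      with h | h
    · exact (show ¬ (SimpleGraph.pathGraph 4).Adj 0 2 by simp [SimpleGraph.pathGraph_adj]) (f.map_adj_iff.mp h)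
    · exact (show ¬ (SimpleGraph.pathGraph 4).Adj 1 3 by simp [SimpleGraph.pathGraph_adj]) (f.map_adj_iff.mp h)
  · have hab := f.map_adj_iff.mpr (show (SimpleGraph.cycleGraph 4).Adj 0 1 by decide)
    have hcd := f.map_adj_iff.mpr (show (SimpleGraph.cycleGraph 4).Adj 2 3 by decide)
    rcases threshold_key r hab hcd (f.injective.ne (by decide)) (f.injective.ne (by decide))
      with h | h
    · exact (show ¬ (SimpleGraph.cycleGraph 4).Adj 0 2 by decide) (f.map_adj_iff.mp h)
    · exact (show ¬ (SimpleGraph.cycleGraph 4).Adj 1 3 by decide) (f.map_adj_iff.mp h)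
  · have h01 : twoK2.Adj 0 1 := by
      simp [twoK2, SimpleGraph.fromEdgeSet_adj]
    have h23 : twoK2.Adj 2 3 := by
      simp [twoK2, SimpleGraph.fromEdgeSet_adj]
    have h02 : ¬ twoK2.Adj 0 2 := by
      simp [twoK2, SimpleGraph.fromEdgeSet_adj]
    have h13 : ¬ twoK2.Adj 1 3 := by
      simp [twoK2, SimpleGraph.fromEdgeSet_adj]
    have hab := f.map_adj_iff.mpr h01
    have hcd := f.map_adj_iff.mpr h23
    rcases threshold_key r hab hcd (f.injective.ne (by decide)) (f.injective.ne (by decide))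
      with h | h
    · exact h02 (f.map_adj_iff.mp h)
    · exact h13 (f.map_adj_iff.mp h)
end

section
/- If a finite simple graph G has no induced subgraph isomorphic to P_4, C_4, or 2K_2, then G is a threshold graph. -/
def MyNested {V : Type*} (G : SimpleGraph V) : Prop :=
  ∀ u v : V, (∀ w, w ≠ u → w ≠ v → G.Adj u w → G.Adj v w) ∨
    (∀ w, w ≠ u → w ≠ v → G.Adj v w → G.Adj u w)

lemma twoK2_adj {i j : Fin 4} : twoK2.Adj i j ↔
    ((i = 0 ∧ j = 1) ∨ (i = 1 ∧ j = 0) ∨ (i = 2 ∧ j = 3) ∨ (i = 3 ∧ j = 2)) := by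
  fin_cases i <;> fin_cases j <;>
    simp [twoK2, SimpleGraph.fromEdgeSet_adj, Sym2.eq, Sym2.rel_iff', Fin.ext_iff] <;> decide

lemma embOfQuad {V : Type*} {G : SimpleGraph V} (H : SimpleGraph (Fin 4))
    (x : Fin 4 → V) (hinj : Function.Injective x)
    (h01 : G.Adj (x 0) (x 1) ↔ H.Adj 0 1) (h02 : G.Adj (x 0) (x 2) ↔ H.Adj 0 2)
    (h03 : G.Adj (x 0) (x 3) ↔ H.Adj 0 3) (h12 : G.Adj (x 1) (x 2) ↔ H.Adj 1 2)
    (h13 : G.Adj (x 1) (x 3) ↔ H.Adj 1 3) (h23 : G.Adj (x 2) (x 3) ↔ H.Adj 2 3) :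
    Nonempty (H ↪g G) := by
  refine ⟨⟨⟨x, hinj⟩, ?_⟩⟩
  intro i j
  fin_cases i <;> fin_cases j <;>
    first
      | exact iff_of_false (G.loopless.irrefl _) (H.loopless.irrefl _)
      | exact h01 | exact h02 | exact h03 | exact h12 | exact h13 | exact h23
      | exact (G.adj_comm _ _).trans (h01.trans (H.adj_comm _ _))
      | exact (G.adj_comm _ _).trans (h02.trans (H.adj_comm _ _))
      | exact (G.adj_comm _ _).trans (h03.trans (H.adj_comm _ _))
      | exact (G.adj_comm _ _).trans (h12.trans (H.adj_comm _ _))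
      | exact (G.adj_comm _ _).trans (h13.trans (H.adj_comm _ _))
      | exact (G.adj_comm _ _).trans (h23.trans (H.adj_comm _ _))

lemma nested_of_free {V : Type*} (G : SimpleGraph V)
    (hP4 : IsEmpty (SimpleGraph.pathGraph 4 ↪g G))
    (hC4 : IsEmpty (SimpleGraph.cycleGraph 4 ↪g G))
    (h2K2 : IsEmpty (twoK2 ↪g G)) : MyNested G := by
  intro u v
  by_contra hc
  push_neg at hc
  obtain ⟨⟨a, hau, hav, hua, hva⟩, ⟨b, hbu, hbv, hvb, hub⟩⟩ := hc
  have huv : u ≠ v := by rintro rfl; exact hub hvb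
  have hab : a ≠ b := by rintro rfl; exact hub hua
  have pIff : ∀ i j : Fin 4, (SimpleGraph.pathGraph 4).Adj i j ↔
      (i.val + 1 = j.val ∨ j.val + 1 = i.val) := fun _ _ => SimpleGraph.pathGraph_adj
  have cIff : ∀ i j : Fin 4, (SimpleGraph.cycleGraph 4).Adj i j ↔ (i - j = 1 ∨ j - i = 1) :=
    fun _ _ => SimpleGraph.cycleGraph_adj
  by_cases huv' : G.Adj u v <;> by_cases hab' : G.Adj a b
  · -- C4 : a-u-v-b-a
    obtain ⟨f⟩ := embOfQuad (SimpleGraph.cycleGraph 4) ![a, u, v, b]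
      (by intro i j hij; fin_cases i <;> fin_cases j <;> simp_all)
      (iff_of_true hua.symm (by rw [cIff]; decide))
      (iff_of_false (fun h => hva h.symm) (by rw [cIff]; decide))
      (iff_of_true hab' (by rw [cIff]; decide))
      (iff_of_true huv' (by rw [cIff]; decide))
      (iff_of_false hub (by rw [cIff]; decide))
      (iff_of_true hvb (by rw [cIff]; decide))
    exact hC4.false f
  · -- P4 : a-u-v-b
    obtain ⟨f⟩ := embOfQuad (SimpleGraph.pathGraph 4) ![a, u, v, b]
      (by intro i j hij; fin_cases i <;> fin_cases j <;> simp_all)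
      (iff_of_true hua.symm (by rw [pIff]; decide))
      (iff_of_false (fun h => hva h.symm) (by rw [pIff]; decide))
      (iff_of_false hab' (by rw [pIff]; decide))
      (iff_of_true huv' (by rw [pIff]; decide))
      (iff_of_false hub (by rw [pIff]; decide))
      (iff_of_true hvb (by rw [pIff]; decide))
    exact hP4.false f
  · -- P4 : u-a-b-v
    obtain ⟨f⟩ := embOfQuad (SimpleGraph.pathGraph 4) ![u, a, b, v]
      (by intro i j hij; fin_cases i <;> fin_cases j <;> simp_all)
      (iff_of_true hua (by rw [pIff]; decide))
      (iff_of_false hub (by rw [pIff]; decide))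
      (iff_of_false huv' (by rw [pIff]; decide))
      (iff_of_true hab' (by rw [pIff]; decide))
      (iff_of_false (fun h => hva h.symm) (by rw [pIff]; decide))
      (iff_of_true hvb.symm (by rw [pIff]; decide))
    exact hP4.false f
  · -- 2K2 : u-a, v-b
    obtain ⟨f⟩ := embOfQuad twoK2 ![u, a, v, b]
      (by intro i j hij; fin_cases i <;> fin_cases j <;> simp_all)
      (iff_of_true hua (by rw [twoK2_adj]; decide))
      (iff_of_false huv' (by rw [twoK2_adj]; decide))
      (iff_of_false hub (by rw [twoK2_adj]; decide))
      (iff_of_false (fun h => hva h.symm) (by rw [twoK2_adj]; decide))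
      (iff_of_false hab' (by rw [twoK2_adj]; decide))
      (iff_of_true hvb (by rw [twoK2_adj]; decide))
    exact h2K2.false f

lemma exists_iso_or_dom {V : Type*} [Fintype V] [Nonempty V] (G : SimpleGraph V)
    (hN : MyNested G) :
    (∃ v : V, ∀ u, ¬ G.Adj v u) ∨ (∃ v : V, ∀ u, u ≠ v → G.Adj v u) := by
  classical
  by_cases hiso : ∃ v : V, ∀ u, ¬ G.Adj v u
  · exact Or.inl hiso
  push_neg at hiso
  obtain ⟨v, -, hv⟩ := Finset.exists_max_image Finset.univ (fun x => (G.neighborFinset x).card)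
    Finset.univ_nonempty
  refine Or.inr ⟨v, fun u hu => ?_⟩
  by_contra hvu
  obtain ⟨w, hw⟩ := hiso u
  have hwu : w ≠ u := fun h => G.loopless.irrefl u (h ▸ hw)
  have hwv : w ≠ v := fun h => hvu (h ▸ hw).symm
  rcases hN v w with h1 | h2
  · -- N(v) ∖ {w} ⊆ N(w) ∖ {v}, leads to set equality
    have hsub : (G.neighborFinset v).erase w ⊆ (G.neighborFinset w).erase v := by
      intro z hz
      rw [Finset.mem_erase, SimpleGraph.mem_neighborFinset] at hz ⊢
      have hzv : z ≠ v := fun h => G.loopless.irrefl v (h ▸ hz.2)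
      exact ⟨hzv, h1 z hzv hz.1 hz.2⟩
    have hcard : ((G.neighborFinset w).erase v).card ≤ ((G.neighborFinset v).erase w).card := by
      by_cases hwin : w ∈ G.neighborFinset v
      · have hvin : v ∈ G.neighborFinset w := by
          rw [SimpleGraph.mem_neighborFinset] at *; exact hwin.symm
        rw [Finset.card_erase_of_mem hwin, Finset.card_erase_of_mem hvin]
        exact Nat.sub_le_sub_right (hv w (Finset.mem_univ w)) 1
      · rw [Finset.erase_eq_of_notMem hwin]
        calc ((G.neighborFinset w).erase v).card ≤ (G.neighborFinset w).card :=
              Finset.card_erase_le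
          _ ≤ (G.neighborFinset v).card := hv w (Finset.mem_univ w)
    have heq := Finset.eq_of_subset_of_card_le hsub hcard
    have : u ∈ (G.neighborFinset w).erase v := by
      rw [Finset.mem_erase, SimpleGraph.mem_neighborFinset]
      exact ⟨hu, hw.symm⟩
    rw [← heq, Finset.mem_erase, SimpleGraph.mem_neighborFinset] at this
    exact hvu this.2
  · exact hvu (h2 u hu (Ne.symm hwu) hw.symm)

lemma key : ∀ (n : ℕ) (V : Type) [Fintype V] (G : SimpleGraph V),
    Fintype.card V = n → MyNested G →
    ∃ r : Fin n → Bool, Nonempty (G ≃g thresholdGraph r) := by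
  intro n
  induction n with
  | zero =>
    intro V _ G hcard _
    haveI : IsEmpty V := Fintype.card_eq_zero_iff.mp hcard
    refine ⟨fun _ => false, ⟨⟨Equiv.equivOfIsEmpty V (Fin 0), ?_⟩⟩⟩
    intro a b
    exact isEmptyElim a
  | succ n ih =>
    intro V _ G hcard hN
    haveI : Nonempty V := Fintype.card_pos_iff.mp (by omega)
    classical
    -- find a vertex which is isolated or dominating
    obtain ⟨v, b, hvb⟩ : ∃ (v : V) (b : Bool), ∀ u, u ≠ v → (G.Adj v u ↔ b = true) := by
      rcases exists_iso_or_dom G hN with ⟨v, hv⟩ | ⟨v, hv⟩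
      · exact ⟨v, false, fun u _ => by simp [hv u]⟩
      · exact ⟨v, true, fun u hu => by simp [hv u hu]⟩
    set S := {u : V // u ≠ v} with hS
    have hcardS : Fintype.card S = n := by
      have := Fintype.card_subtype_compl (fun x : V => x = v)
      rw [Fintype.card_subtype_eq] at this
      have h2 : Fintype.card S = Fintype.card {x : V // ¬ x = v} := rfl
      omega
    set G' : SimpleGraph S := SimpleGraph.comap (Subtype.val) G with hG'
    have hN' : MyNested G' := by
      intro x y
      rcases hN x.1 y.1 with h | h
      · exact Or.inl fun w hw1 hw2 hadj =>
          h w.1 (fun e => hw1 (Subtype.ext e)) (fun e => hw2 (Subtype.ext e)) hadj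
      · exact Or.inr fun w hw1 hw2 hadj =>
          h w.1 (fun e => hw1 (Subtype.ext e)) (fun e => hw2 (Subtype.ext e)) hadj
    obtain ⟨r', ⟨e⟩⟩ := ih S G' hcardS hN'
    refine ⟨Fin.snoc r' b, ⟨⟨⟨?_, ?_, ?_, ?_⟩, ?_⟩⟩⟩
    · exact fun u => if h : u = v then Fin.last n else (e ⟨u, h⟩).castSucc
    · exact fun i => Fin.lastCases v (fun j => (e.symm j).1) i
    · -- left_inv
      intro u
      by_cases h : u = v
      · simp [h]
      · simp only [dif_neg h, Fin.lastCases_castSucc]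
        exact congrArg Subtype.val (e.symm_apply_apply ⟨u, h⟩)
    · -- right_inv
      intro i
      refine Fin.lastCases ?_ (fun j => ?_) i
      · simp
      · simp only [Fin.lastCases_castSucc]
        rw [dif_neg (e.symm j).2]
        congr 1
        exact e.apply_symm_apply j
    · -- map_rel_iff'
      intro x y
      show (thresholdGraph _).Adj _ _ ↔ G.Adj x y
      have hmax : ∀ i j : Fin n, max i.castSucc j.castSucc = (max i j).castSucc := by
        intro i j
        exact (Monotone.map_max (fun a b h => by rwa [Fin.castSucc_le_castSucc_iff])).symm
      by_cases hx : x = v <;> by_cases hy : y = v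
      · subst hx; subst hy
        simp [thresholdGraph]
      · subst hx
        simp only [Equiv.coe_fn_mk, eq_self_iff_true, dite_true, dif_neg hy, thresholdGraph]
        have h1 : max (Fin.last n) (e ⟨y, hy⟩).castSucc = Fin.last n :=
          max_eq_left (Fin.le_last _)
        erw [h1, Fin.snoc_last]
        have h2 : Fin.last n ≠ (e ⟨y, hy⟩).castSucc := (Fin.castSucc_lt_last _).ne'
        rw [G.adj_comm]  -- G.Adj v y
        constructor
        · rintro ⟨-, hb⟩; exact ((hvb y hy).mpr hb).symm
        · intro h; exact ⟨h2, (hvb y hy).mp h.symm⟩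
      · subst hy
        simp only [Equiv.coe_fn_mk, eq_self_iff_true, dite_true, dif_neg hx, thresholdGraph]
        have h1 : max (e ⟨x, hx⟩).castSucc (Fin.last n) = Fin.last n :=
          max_eq_right (Fin.le_last _)
        erw [h1, Fin.snoc_last]
        have h2 : (e ⟨x, hx⟩).castSucc ≠ Fin.last n := (Fin.castSucc_lt_last _).ne
        constructor
        · rintro ⟨-, hb⟩; exact ((hvb x hx).mpr hb).symm
        · intro h; exact ⟨h2, (hvb x hx).mp h.symm⟩
      · simp only [Equiv.coe_fn_mk, dif_neg hx, dif_neg hy, thresholdGraph]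
        rw [hmax, Fin.snoc_castSucc]
        have := e.map_rel_iff (a := ⟨x, hx⟩) (b := ⟨y, hy⟩)
        simp only [thresholdGraph] at this
        rw [show G'.Adj ⟨x, hx⟩ ⟨y, hy⟩ = G.Adj x y from rfl] at this
        rw [← this]
        constructor
        · rintro ⟨h1, h2⟩; exact ⟨fun h => h1 (congrArg Fin.castSucc h), h2⟩
        · rintro ⟨h1, h2⟩; exact ⟨fun h => h1 (Fin.castSucc_inj.mp h), h2⟩

theorem stmt3 {V : Type} [Fintype V] [Nonempty V] (G : SimpleGraph V)
    (hP4 : IsEmpty (SimpleGraph.pathGraph 4 ↪g G))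
    (hC4 : IsEmpty (SimpleGraph.cycleGraph 4 ↪g G))
    (h2K2 : IsEmpty (twoK2 ↪g G)) :
    ∃ (n : ℕ) (r : Fin n → Bool), Nonempty (G ≃g thresholdGraph r) := by
  obtain ⟨r, h⟩ := key (Fintype.card V) V G rfl (nested_of_free G hP4 hC4 h2K2)
  exact ⟨Fintype.card V, r, h⟩
end

section
/- The adjacency matrix of a threshold graph, with vertices ordered by non-increasing degree, is stepwise: if i < j and A_{ij} = 1, then A_{hk} = 1 for all h ≤ i and k ≤ j with h < k. -/
instance {n : ℕ} (r : Fin n → Bool) : DecidableRel (thresholdGraph r).Adj :=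
  fun i j => inferInstanceAs (Decidable (i ≠ j ∧ r (max i j) = true))

/-- Degree domination in a threshold graph: if `deg v ≤ deg u` and `v` is adjacent to `w ≠ u`,
then `u` is adjacent to `w`. -/
lemma threshold_adj_dom {n : ℕ} (r : Fin n → Bool) (u v w : Fin n)
    (hdeg : (thresholdGraph r).degree v ≤ (thresholdGraph r).degree u)
    (hadj : (thresholdGraph r).Adj v w) (hwu : w ≠ u) :
    (thresholdGraph r).Adj u w := by
  by_contra hne
  obtain ⟨hvw, h1⟩ := hadj
  have h2 : r (max u w) = false := by
    by_contra h
    exact hne ⟨hwu.symm, by simpa using h⟩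
  have huv : u ≠ v := by
    rintro rfl; rw [h1] at h2; simp at h2
  -- key: every neighbor of u other than v is a neighbor of v
  have key : ∀ x : Fin n, x ≠ v → (thresholdGraph r).Adj u x → r (max v x) = true := by
    intro x hxv hux
    obtain ⟨hux1, hux2⟩ := hux
    rcases lt_or_gt_of_ne hux1 with hlt | hgt
    · -- u < x : r x = true
      have hrx : r x = true := by rwa [max_eq_right hlt.le] at hux2
      rcases lt_or_gt_of_ne hxv with h3 | h3
      · -- x < v : need r v = true
        rcases lt_or_gt_of_ne hvw with h4 | h4
        · -- v < w : then u < w, r w = false, but max v w = w gives r w = true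
          exfalso
          have : r w = true := by rwa [max_eq_right h4.le] at h1
          rw [max_eq_right (le_of_lt (hlt.trans (h3.trans h4)))] at h2
          simp [this] at h2
        · -- w < v : max v w = v
          have hrv : r v = true := by rwa [max_eq_left h4.le] at h1
          rw [max_eq_left h3.le]; exact hrv
      · rw [max_eq_right h3.le]; exact hrx
    · -- x < u : r u = true
      have hru : r u = true := by rwa [max_eq_left hgt.le] at hux2
      rcases lt_or_gt_of_ne hwu with h4 | h4
      · exfalso
        rw [max_eq_left h4.le] at h2; simp [hru] at h2
      · -- u < w : r w = false
        have hrw : r w = false := by rwa [max_eq_right h4.le] at h2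
        rcases lt_or_gt_of_ne hvw with h5 | h5
        · exfalso
          have : r w = true := by rwa [max_eq_right h5.le] at h1
          simp [this] at hrw
        · have hrv : r v = true := by rwa [max_eq_left h5.le] at h1
          have : x < v := hgt.trans (h4.trans h5)
          rw [max_eq_left this.le]; exact hrv
  -- strict subset of neighbor finsets (after erasing)
  have hsub : ((thresholdGraph r).neighborFinset u).erase v ⊂
      ((thresholdGraph r).neighborFinset v).erase u := by
    constructor
    · intro x hx
      rw [Finset.mem_erase, SimpleGraph.mem_neighborFinset] at hx
      obtain ⟨hxv, hux⟩ := hx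
      rw [Finset.mem_erase, SimpleGraph.mem_neighborFinset]
      exact ⟨hux.ne', Ne.symm hxv, key x hxv hux⟩
    · intro hcon
      have hw : w ∈ ((thresholdGraph r).neighborFinset v).erase u := by
        rw [Finset.mem_erase, SimpleGraph.mem_neighborFinset]
        exact ⟨hwu, hvw, h1⟩
      have := hcon hw
      rw [Finset.mem_erase, SimpleGraph.mem_neighborFinset] at this
      exact hne this.2
  have hcard := Finset.card_lt_card hsub
  -- relate erased cards to degrees
  have hdu : (thresholdGraph r).degree u = ((thresholdGraph r).neighborFinset u).card := rfl
  have hdv : (thresholdGraph r).degree v = ((thresholdGraph r).neighborFinset v).card := rfl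
  by_cases hmem : v ∈ (thresholdGraph r).neighborFinset u
  · have hmem' : u ∈ (thresholdGraph r).neighborFinset v := by
      rw [SimpleGraph.mem_neighborFinset] at hmem ⊢
      exact hmem.symm
    have e1 := Finset.card_erase_of_mem hmem
    have e2 := Finset.card_erase_of_mem hmem'
    have p1 : 0 < ((thresholdGraph r).neighborFinset u).card := Finset.card_pos.mpr ⟨v, hmem⟩
    omega
  · have hmem' : u ∉ (thresholdGraph r).neighborFinset v := by
      rw [SimpleGraph.mem_neighborFinset] at hmem ⊢
      exact fun h => hmem h.symm
    rw [Finset.erase_eq_of_notMem hmem, Finset.erase_eq_of_notMem hmem'] at hcard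
    omega

/-- The stepwise property of the adjacency matrix of a threshold graph, when vertices
are listed in non-increasing order of degree (the relabeling `e` gives the ordering):
if `i < j` and the `(i,j)` entry is `1`, then so is every `(h,k)` entry with
`h ≤ i`, `k ≤ j`, `h < k`. -/
theorem stmt4 {n : ℕ} (r : Fin n → Bool) (e : Fin n ≃ Fin n)
    (hdeg : ∀ i j : Fin n, i ≤ j →
      (thresholdGraph r).degree (e j) ≤ (thresholdGraph r).degree (e i)) :
    ∀ i j h k : Fin n, i < j → (thresholdGraph r).Adj (e i) (e j) →
      h ≤ i → k ≤ j → h < k → (thresholdGraph r).Adj (e h) (e k) := by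
  intro i j h k hij hadj hhi hkj hhk
  have hj_ne_h : (e j : Fin n) ≠ e h := fun hq => (hhi.trans_lt hij).ne (e.injective hq).symm
  have step1 : (thresholdGraph r).Adj (e h) (e j) :=
    threshold_adj_dom r (e h) (e i) (e j) (hdeg h i hhi) hadj hj_ne_h
  have hh_ne_k : (e h : Fin n) ≠ e k := fun hq => hhk.ne (e.injective hq)
  have step2 : (thresholdGraph r).Adj (e k) (e h) :=
    threshold_adj_dom r (e k) (e j) (e h) (hdeg k j hkj) step1.symm hh_ne_k
  exact step2.symm
end

section
/- For positive integers n and m with n−1 ≤ m ≤ n(n−1)/2, there exists a connected threshold graph on n vertices with exactly m edges. -/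
open Finset

lemma subset_sum : ∀ k t : ℕ, t ≤ k * (k + 1) / 2 →
    ∃ S : Finset ℕ, S ⊆ Finset.Icc 1 k ∧ S.sum id = t := by
  intro k
  induction k with
  | zero =>
    intro t ht
    simp only [Nat.zero_mul] at ht
    interval_cases t
    exact ⟨∅, by simp⟩
  | succ k ih =>
    intro t ht
    have ht' : t ≤ (k + 1) * (k + 2) / 2 := ht
    by_cases h : t ≤ k * (k + 1) / 2
    · obtain ⟨S, hS, hsum⟩ := ih t h
      exact ⟨S, hS.trans (Finset.Icc_subset_Icc_right (Nat.le_succ k)), hsum⟩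
    · push_neg at h
      have hd2 : 2 * ((k + 1) * (k + 1 + 1) / 2) = (k + 1) * (k + 1 + 1) := by
        rw [Nat.two_mul_div_two_of_even]; exact Nat.even_mul_succ_self (k + 1)
      have hd3 : 2 * (k * (k + 1) / 2) = k * (k + 1) := by
        rw [Nat.two_mul_div_two_of_even]; exact Nat.even_mul_succ_self k
      have hprod : (k + 1) * (k + 1 + 1) = k * (k + 1) + 2 * (k + 1) := by ring
      have hkk : k * (k + 1) = k * k + k := by ring
      have hsq : k ≤ k * k := by nlinarith
      have hk1 : k + 1 ≤ t := by omega
      have htt : t - (k + 1) ≤ k * (k + 1) / 2 := by omega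
      obtain ⟨S, hS, hsum⟩ := ih (t - (k + 1)) htt
      have hnotmem : k + 1 ∉ S := fun hmem => by
        have := Finset.mem_Icc.mp (hS hmem); omega
      refine ⟨insert (k + 1) S, ?_, ?_⟩
      · intro x hx
        rcases Finset.mem_insert.mp hx with rfl | hx
        · simp
        · have := hS hx; simp at this ⊢; omega
      · rw [Finset.sum_insert hnotmem, hsum]
        show (k + 1) + (t - (k + 1)) = t
        omega

lemma threshold_edge_count {n : ℕ} (r : Fin n → Bool) :
    (thresholdGraph r).edgeSet.ncard = ∑ i : Fin n, (if r i then (i : ℕ) else 0) := by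
  classical
  rw [← Nat.card_coe_set_eq]
  have e1 : (thresholdGraph r).edgeSet ≃ {p : Fin n × Fin n // p.1 < p.2 ∧ r p.2 = true} := by
    refine
      { toFun := fun e => ⟨(Sym2.lift ⟨fun i j => (min i j, max i j),
          fun i j => by simp [min_comm, max_comm]⟩) e.1, ?_⟩
        invFun := fun p => ⟨s(p.1.1, p.1.2), ?_⟩
        left_inv := ?_
        right_inv := ?_ }
    · obtain ⟨e, he⟩ := e
      induction e with
      | _ i j =>
        rw [SimpleGraph.mem_edgeSet] at he
        obtain ⟨hne, hr⟩ := he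
        simp only [Sym2.lift_mk]
        refine ⟨?_, hr⟩
        rcases lt_trichotomy i j with h | h | h
        · rw [min_eq_left h.le, max_eq_right h.le]; exact h
        · exact absurd h hne
        · rw [min_eq_right h.le, max_eq_left h.le]; exact h
    · rw [SimpleGraph.mem_edgeSet]
      exact ⟨ne_of_lt p.2.1, by rw [max_eq_right (le_of_lt p.2.1)]; exact p.2.2⟩
    · rintro ⟨e, he⟩
      induction e with
      | _ i j =>
        simp only [Sym2.lift_mk, Subtype.mk.injEq]
        rcases le_total i j with h' | h'
        · rw [min_eq_left h', max_eq_right h']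
        · rw [min_eq_right h', max_eq_left h', Sym2.eq_swap]
    · rintro ⟨⟨a, b⟩, hab, hr⟩
      simp only [Sym2.lift_mk, Subtype.mk.injEq]
      rw [min_eq_left (le_of_lt hab), max_eq_right (le_of_lt hab)]
  have e2 : {p : Fin n × Fin n // p.1 < p.2 ∧ r p.2 = true} ≃
      Σ j : Fin n, {i : Fin n // i < j ∧ r j = true} :=
    { toFun := fun p => ⟨p.1.2, p.1.1, p.2⟩
      invFun := fun q => ⟨(q.2.1, q.1), q.2.2⟩
      left_inv := fun ⟨⟨a, b⟩, h⟩ => rfl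
      right_inv := fun ⟨j, i, h⟩ => rfl }
  rw [Nat.card_congr (e1.trans e2), Nat.card_eq_fintype_card, Fintype.card_sigma]
  refine Finset.sum_congr rfl fun j _ => ?_
  rw [Fintype.card_subtype]
  by_cases hj : r j = true
  · have hfil : (Finset.univ.filter fun x : Fin n => x < j ∧ r j = true)
        = Finset.Iio j := by
      ext x; simp [hj]
    rw [hfil, Fin.card_Iio]
    simp [hj]
  · have hfil : (Finset.univ.filter fun x : Fin n => x < j ∧ r j = true)
        = (∅ : Finset (Fin n)) := by
      ext x; simp [hj]
    rw [hfil]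
    simp [hj]

theorem stmt13 (n m : ℕ) (hn : 0 < n) (hm : 0 < m)
    (h1 : n - 1 ≤ m) (h2 : m ≤ n * (n - 1) / 2) :
    ∃ r : Fin n → Bool, (thresholdGraph r).Connected ∧
      (thresholdGraph r).edgeSet.ncard = m := by
  classical
  obtain ⟨n', rfl⟩ : ∃ n', n = n' + 1 := ⟨n - 1, by omega⟩
  simp only [Nat.add_sub_cancel] at h1 h2 ⊢
  -- split m = n' + t with t ≤ n'(n'-1)/2
  have hsplit : ∀ k : ℕ, (k + 1) * k / 2 = k + k * (k - 1) / 2 := by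
    intro k
    rcases Nat.eq_zero_or_pos k with rfl | hk
    · simp
    obtain ⟨j, rfl⟩ : ∃ j, k = j + 1 := ⟨k - 1, by omega⟩
    simp only [Nat.add_sub_cancel]
    have ha : 2 * ((j + 1 + 1) * (j + 1) / 2) = (j + 1 + 1) * (j + 1) := by
      rw [Nat.two_mul_div_two_of_even]
      have := Nat.even_mul_succ_self (j + 1); rwa [mul_comm] at this
    have hb : 2 * ((j + 1) * j / 2) = (j + 1) * j := by
      rw [Nat.two_mul_div_two_of_even]
      have := Nat.even_mul_succ_self j; rwa [mul_comm] at this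
    have hp : (j + 1 + 1) * (j + 1) = (j + 1) * j + 2 * (j + 1) := by ring
    omega
  have ht : m - n' ≤ (n' - 1) * ((n' - 1) + 1) / 2 := by
    have h3 := hsplit n'
    rcases Nat.eq_zero_or_pos n' with rfl | hn'
    · simp at h2 ⊢; omega
    have h4 : (n' - 1) + 1 = n' := by omega
    rw [h4, mul_comm]
    omega
  obtain ⟨S0, hS0, hsum0⟩ := subset_sum (n' - 1) (m - n') ht
  have hn'pos : 0 < n' := by
    rcases Nat.eq_zero_or_pos n' with rfl | h
    · simp at h2; omega
    · exact h
  have hnm : n' ∉ S0 := fun h => by have := hS0 h; simp at this; omega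
  set S : Finset ℕ := insert n' S0 with hS
  have hsumS : S.sum id = m := by
    rw [hS, Finset.sum_insert hnm, hsum0]
    show n' + (m - n') = m
    omega
  have hSub : ∀ x ∈ S, 1 ≤ x ∧ x ≤ n' := by
    intro x hx
    rcases Finset.mem_insert.mp hx with rfl | hx
    · omega
    · have := hS0 hx; simp at this; omega
  refine ⟨fun i => decide (i.val ∈ S), ?_, ?_⟩
  · -- connectivity via the dominating vertex `Fin.last n'`
    have hrv : decide ((Fin.last n').val ∈ S) = true := by
      simp [Fin.val_last, hS]
    have hadj : ∀ u : Fin (n' + 1), u ≠ Fin.last n' →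
        (thresholdGraph (fun i => decide (i.val ∈ S))).Adj u (Fin.last n') := by
      intro u hu
      refine ⟨hu, ?_⟩
      rw [max_eq_right (Fin.le_last u)]
      exact hrv
    rw [SimpleGraph.connected_iff]
    refine ⟨fun a b => ?_, ⟨Fin.last n'⟩⟩
    by_cases ha : a = Fin.last n'
    · by_cases hb : b = Fin.last n'
      · rw [ha, hb]
      · rw [ha]; exact ((hadj b hb).symm).reachable
    · by_cases hb : b = Fin.last n'
      · rw [hb]; exact (hadj a ha).reachable
      · exact ((hadj a ha).reachable).trans ((hadj b hb).symm).reachable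
  · rw [threshold_edge_count]
    have hstep : ∑ i : Fin (n' + 1), (if decide (i.val ∈ S) then (i : ℕ) else 0)
        = ∑ i ∈ Finset.range (n' + 1), (if i ∈ S then i else 0) := by
      rw [← Fin.sum_univ_eq_sum_range (fun i => if i ∈ S then i else 0) (n' + 1)]
      refine Finset.sum_congr rfl fun i _ => by simp
    rw [hstep, ← Finset.sum_filter]
    have hfilter : Finset.filter (fun i => i ∈ S) (Finset.range (n' + 1)) = S := by
      ext x
      simp only [Finset.mem_filter, Finset.mem_range]
      constructor
      · exact fun h => h.2
      · intro h; exact ⟨by have := hSub x h; omega, h⟩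
    rw [hfilter]
    exact hsumS
end
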